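/- arXiv:1904.05227 — 2 statements merged into one kernel-verified Lean document; each statement's English description precedes it below -/
import Mathlib

section
/- Let q be a prime power, let C ⊆ 𝔽_q^{n×m} be a rank-metric code of dimension k ≥ 1 and minimum distance d, and let A_1, …, A_R ∈ 𝔽_q^{n×m} be linearly independent matrices of rank one such that C ⊆ span_{𝔽_q}{A_1, …, A_R}. Let D = {λ ∈ 𝔽_q^R : Σ_{r=1}^R λ_r A_r ∈ C}. Then: (1) for every λ ∈ 𝔽_q^R, rank(Σ_{r=1}^R λ_r A_r) ≤ wt_H(λ); (2) D is an 𝔽_q-linear subspace of 𝔽_q^R with dim(D) = k, and every non-zero λ ∈ D satisfies wt_H(λ) ≥ d. -/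
open Matrix

/-- The minimum (rank) distance of a rank-metric code. -/
noncomputable def minRankDist {F : Type*} [Field F] {n m : ℕ}
    (C : Submodule F (Matrix (Fin n) (Fin m) F)) : ℕ :=
  sInf {r : ℕ | ∃ M ∈ C, M ≠ 0 ∧ M.rank = r}

/-!
Writing a matrix as `∑ λ_r A_r` with rank-one `A_r` exhibits it as a sum of `wt_H(λ)` rank-one
matrices, and rank is subadditive; this gives (1). Linear independence of the `A_r` makes
`λ ↦ ∑ λ_r A_r` injective, so `D` is isomorphic to its image, which is `C` because `C` lies in
the span of the `A_r`. A non-zero `λ ∈ D` therefore gives a non-zero codeword, whose rank is at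
least `d` and, by (1), at most `wt_H(λ)`.
-/

namespace Matrix

variable {K ι m n : Type*} [Field K] [Fintype n]

theorem rank_add_le (A B : Matrix m n K) : (A + B).rank ≤ A.rank + B.rank := by
  have hrange : LinearMap.range (A + B).mulVecLin
      ≤ LinearMap.range A.mulVecLin ⊔ LinearMap.range B.mulVecLin := by
    rintro _ ⟨v, rfl⟩
    rw [mulVecLin_apply, add_mulVec]
    exact Submodule.add_mem_sup (LinearMap.mem_range_self _ v) (LinearMap.mem_range_self _ v)
  exact (Submodule.finrank_mono hrange).trans (Submodule.finrank_add_le_finrank_add_finrank _ _)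

theorem rank_sum_le (s : Finset ι) (M : ι → Matrix m n K) :
    (∑ i ∈ s, M i).rank ≤ ∑ i ∈ s, (M i).rank :=
  Finset.sum_hom_rel (r := fun (N : Matrix m n K) (k : ℕ) => N.rank ≤ k) (by rw [rank_zero])
    fun _ _ _ h => (rank_add_le _ _).trans (by gcongr)

theorem rank_sum_smul_le_hammingNorm [Fintype ι] [DecidableEq K] (A : ι → Matrix m n K)
    (hA : ∀ i, (A i).rank ≤ 1) (c : ι → K) : (∑ i, c i • A i).rank ≤ hammingNorm c := by
  rw [← Finset.sum_filter_of_ne fun i _ hi => left_ne_zero_of_smul hi]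
  calc (∑ i with c i ≠ 0, c i • A i).rank
      ≤ ∑ i with c i ≠ 0, (c i • A i).rank := rank_sum_le _ _
    _ = ∑ i with c i ≠ 0, (A i).rank := Finset.sum_congr rfl fun i hi =>
        rank_smul_of_mem_nonZeroDivisors _
          (mem_nonZeroDivisors_of_ne_zero (Finset.mem_filter.1 hi).2)
    _ ≤ ∑ i with c i ≠ 0, 1 := Finset.sum_le_sum fun i _ => hA i
    _ = hammingNorm c := by simp [hammingNorm]

end Matrix

theorem Submodule.finrank_comap_of_injective {K V W : Type*} [Field K] [AddCommGroup V]
    [Module K V] [AddCommGroup W] [Module K W] {f : V →ₗ[K] W} (hf : Function.Injective f)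
    {p : Submodule K W} (hp : p ≤ LinearMap.range f) :
    Module.finrank K (p.comap f) = Module.finrank K p := by
  rw [(Submodule.equivMapOfInjective f hf _).finrank_eq, Submodule.map_comap_eq_of_le hp]

theorem minRankDist_le_rank {F : Type*} [Field F] {n m : ℕ}
    {C : Submodule F (Matrix (Fin n) (Fin m) F)} {M : Matrix (Fin n) (Fin m) F} (hM : M ∈ C)
    (hM0 : M ≠ 0) : minRankDist C ≤ M.rank :=
  Nat.sInf_le ⟨M, hM, hM0, rfl⟩

theorem block_code_from_R_basis_general {F : Type*} [Field F] [DecidableEq F]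
    {n m k d R : ℕ} (C : Submodule F (Matrix (Fin n) (Fin m) F))
    (A : Fin R → Matrix (Fin n) (Fin m) F)
    (hA1 : ∀ r, (A r).rank = 1) (hAind : LinearIndependent F A)
    (hCA : C ≤ Submodule.span F (Set.range A))
    (hk : Module.finrank F C = k) (hd : minRankDist C = d) :
    (∀ lam : Fin R → F, (∑ r, lam r • A r).rank ≤ hammingNorm lam) ∧
    Module.finrank F (Submodule.comap (Fintype.linearCombination F A) C) = k ∧
    (∀ lam ∈ Submodule.comap (Fintype.linearCombination F A) C,
      lam ≠ 0 → d ≤ hammingNorm lam) := by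
  have hrank := rank_sum_smul_le_hammingNorm A (fun r => (hA1 r).le)
  have hinj := hAind.fintypeLinearCombination_injective
  refine ⟨hrank, ?_, fun lam hlam hlam0 => ?_⟩
  · have hCrange : C ≤ LinearMap.range (Fintype.linearCombination F A) :=
      Fintype.range_linearCombination F A ▸ hCA
    rw [Submodule.finrank_comap_of_injective hinj hCrange, hk]
  · have hM0 : Fintype.linearCombination F A lam ≠ 0 :=
      fun h => hlam0 (hinj (h.trans (map_zero _).symm))
    calc d = minRankDist C := hd.symm
      _ ≤ (Fintype.linearCombination F A lam).rank := minRankDist_le_rank hlam hM0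
      _ ≤ hammingNorm lam := by rw [Fintype.linearCombination_apply]; exact hrank lam

/-- Given a rank-metric code `C ⊆ 𝔽_q^{n×m}` of dimension `k ≥ 1` and minimum distance
`d`, contained in the span of linearly independent rank-one matrices `A_1, …, A_R`:
(1) `rank(Σ λ_r A_r) ≤ wt_H(λ)` for all `λ`; and (2) `D = {λ : Σ λ_r A_r ∈ C}` is a
`k`-dimensional subspace all of whose non-zero vectors have Hamming weight `≥ d`. -/
theorem block_code_from_R_basis {F : Type*} [Field F] [Fintype F] [DecidableEq F]
    {n m k d R : ℕ} (C : Submodule F (Matrix (Fin n) (Fin m) F))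
    (A : Fin R → Matrix (Fin n) (Fin m) F)
    (hA1 : ∀ r, (A r).rank = 1) (hAind : LinearIndependent F A)
    (hCA : C ≤ Submodule.span F (Set.range A))
    (hk : Module.finrank F C = k) (hk1 : 1 ≤ k) (hd : minRankDist C = d) :
    (∀ lam : Fin R → F, (∑ r, lam r • A r).rank ≤ hammingNorm lam) ∧
    Module.finrank F (Submodule.comap (Fintype.linearCombination F A) C) = k ∧
    (∀ lam ∈ Submodule.comap (Fintype.linearCombination F A) C,
      lam ≠ 0 → d ≤ hammingNorm lam) :=
  block_code_from_R_basis_general C A hA1 hAind hCA hk hd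
end

section
/- Let q be a prime power and let C ⊆ 𝔽_q^{n×m} be a rank-metric code of dimension k ≥ 2. Then for every integer r with 1 ≤ r ≤ k − 1 one has d_r(C) < d_{r+1}(C). -/
/-!
Let `U` be a span of rank-one matrices realising `d_{r+1}(C)`. Dropping one vector from a basis
of `U` consisting of rank-one matrices leaves a span of rank-one matrices `U'` of codimension one
in `U`, and intersecting with a hyperplane of `U` lowers `dim (C ∩ U)` by at most one. Hence
`dim (C ∩ U') ≥ r` and `d_r(C) ≤ dim U' = d_{r+1}(C) - 1`.
-/

open Matrix

noncomputable def genTensorRank {F : Type*} [Field F] {n m : ℕ}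
    (C : Submodule F (Matrix (Fin n) (Fin m) F)) (r : ℕ) : ℕ :=
  sInf {s : ℕ | ∃ U : Submodule F (Matrix (Fin n) (Fin m) F),
    (∃ S : Set (Matrix (Fin n) (Fin m) F), (∀ M ∈ S, M.rank = 1) ∧
      U = Submodule.span F S) ∧
    r ≤ Module.finrank F ↥(C ⊓ U) ∧ Module.finrank F ↥U = s}

open Module Submodule

namespace Matrix

variable {K m n : Type*} [Field K] [Fintype n]

theorem rank_pos_of_ne_zero {A : Matrix m n K} (hA : A ≠ 0) : 0 < A.rank := by
  classical
  rw [Nat.pos_iff_ne_zero, rank, Ne, Submodule.finrank_eq_zero, LinearMap.range_eq_bot]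
  intro h
  exact hA (toLin'.injective (by rwa [toLin'_apply', map_zero]))

theorem rank_single_one [DecidableEq m] [DecidableEq n] (i : m) (j : n) :
    (single i j (1 : K)).rank = 1 := by
  refine le_antisymm ?_ (rank_pos_of_ne_zero ?_)
  · rw [single_eq_single_vecMulVec_single]
    exact rank_vecMulVec_le _ _
  · simpa [← Matrix.ext_iff] using ⟨i, j, by simp⟩

theorem span_setOf_rank_eq_one [Fintype m] [DecidableEq m] [DecidableEq n] :
    span K {A : Matrix m n K | A.rank = 1} = ⊤ := by
  refine eq_top_iff.2 ((stdBasis K m n).span_eq.symm.le.trans (span_mono ?_))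
  rintro _ ⟨⟨i, j⟩, rfl⟩
  rw [stdBasis_eq_single]
  exact rank_single_one i j

end Matrix

section FiniteDimensional

variable {K V : Type*} [DivisionRing K] [AddCommGroup V] [Module K V]

theorem Submodule.finrank_inf_add_finrank_le_of_le (C : Submodule K V) {U' U : Submodule K V}
    [FiniteDimensional K U] (h : U' ≤ U) :
    finrank K ↥(C ⊓ U) + finrank K U' ≤ finrank K ↥(C ⊓ U') + finrank K U := by
  have : FiniteDimensional K U' := Submodule.finiteDimensional_of_le h
  have hsup : finrank K ↥(C ⊓ U ⊔ U') ≤ finrank K U := finrank_mono (sup_le inf_le_right h)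
  have hinf : C ⊓ U ⊓ U' = C ⊓ U' := by rw [inf_assoc, inf_eq_right.2 h]
  have hdim := finrank_sup_add_finrank_inf_eq (C ⊓ U) U'
  rw [hinf] at hdim
  omega

theorem exists_subset_finrank_span_eq [FiniteDimensional K V] {S : Set V} {k : ℕ}
    (hk : k ≤ finrank K (span K S)) : ∃ T ⊆ S, finrank K (span K T) = k := by
  classical
  obtain ⟨B, hBS, hBspan, hBli⟩ := exists_linearIndependent K S
  replace hBli : LinearIndepOn K id B := hBli
  have : Fintype B := @Fintype.ofFinite B hBli.finite
  rw [← hBspan, finrank_span_set_eq_card hBli] at hk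
  obtain ⟨t, htB, rfl⟩ := Finset.exists_subset_card_eq hk
  have htB' : (t : Set V) ⊆ B := by simpa using htB
  exact ⟨t, htB'.trans hBS, finrank_span_finset_eq_card (hBli.mono htB')⟩

end FiniteDimensional

section GenTensorRank

variable {F : Type*} [Field F] {n m : ℕ} (C : Submodule F (Matrix (Fin n) (Fin m) F))

theorem genTensorRank_le_finrank_span {r : ℕ} {S : Set (Matrix (Fin n) (Fin m) F)}
    (hS : ∀ M ∈ S, M.rank = 1) (hr : r ≤ finrank F ↥(C ⊓ span F S)) :
    genTensorRank C r ≤ finrank F (span F S) :=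
  Nat.sInf_le ⟨_, ⟨S, hS, rfl⟩, hr, rfl⟩

theorem exists_finrank_span_eq_genTensorRank {r : ℕ} (hr : r ≤ finrank F C) :
    ∃ S : Set (Matrix (Fin n) (Fin m) F), (∀ M ∈ S, M.rank = 1) ∧
      r ≤ finrank F ↥(C ⊓ span F S) ∧ finrank F (span F S) = genTensorRank C r := by
  obtain ⟨_, ⟨S, hS, rfl⟩, hr, hdim⟩ : genTensorRank C r ∈ _ :=
    Nat.sInf_mem ⟨_, ⊤, ⟨_, fun _ ↦ id, span_setOf_rank_eq_one.symm⟩, by rwa [inf_top_eq], rfl⟩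
  exact ⟨S, hS, hr, hdim⟩

end GenTensorRank

theorem genTensorRank_strictMono_general {F : Type*} [Field F] {n m : ℕ}
    (C : Submodule F (Matrix (Fin n) (Fin m) F)) :
    ∀ r : ℕ, 1 ≤ r → r ≤ Module.finrank F C - 1 →
      genTensorRank C r < genTensorRank C (r + 1) := by
  intro r hr1 hrk
  obtain ⟨S, hS, hCS, hdim⟩ := exists_finrank_span_eq_genTensorRank C (r := r + 1) (by omega)
  have hSpos : r + 1 ≤ finrank F (span F S) := hCS.trans (finrank_mono inf_le_right)
  obtain ⟨T, hTS, hT⟩ := exists_subset_finrank_span_eq (K := F) (S := S) (Nat.sub_le _ 1)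
  have hdrop := C.finrank_inf_add_finrank_le_of_le (span_mono hTS)
  calc genTensorRank C r ≤ finrank F (span F T) :=
        genTensorRank_le_finrank_span C (fun M hM ↦ hS M (hTS hM)) (by omega)
    _ < genTensorRank C (r + 1) := by omega

/-- The generalized tensor ranks of a rank-metric code of dimension `k ≥ 2` are
strictly increasing: `d_r(C) < d_{r+1}(C)` for `1 ≤ r ≤ k - 1`. -/
theorem genTensorRank_strictMono {F : Type*} [Field F] [Fintype F] {n m : ℕ}
    (C : Submodule F (Matrix (Fin n) (Fin m) F)) (hk : 2 ≤ Module.finrank F C) :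
    ∀ r : ℕ, 1 ≤ r → r ≤ Module.finrank F C - 1 →
      genTensorRank C r < genTensorRank C (r + 1) :=
  genTensorRank_strictMono_general C
end
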